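/- arXiv:1307.0676 — 5 statements merged into one kernel-verified Lean document; each statement's English description precedes it below -/
import Mathlib

section
/- Let M and N be upper triangular k×k matrices over K[x] satisfying M·N = x²·Id. Then either there exist invertible upper triangular matrices G and H over K[x] such that G·M·H is a diagonal matrix each of whose diagonal entries equals 1 or x, or M admits a critical vector of degree 2. -/
open Polynomial

/-- A vector `v ∈ K[x]^k` is basis-adapted if its coordinates generate the unit ideal of `K[x]`
(equivalently, `v` is part of a `K[x]`-basis of `K[x]^k`). -/
def BasisAdapted {K : Type*} [Field K] {k : ℕ} (v : Fin k → Polynomial K) : Prop :=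
  Ideal.span (Set.range v) = ⊤

/-- A vector `v ∈ K[x]^k` is critical of degree `d` for `M` if `v` is basis-adapted and
`M·v = x^d·w` for some basis-adapted vector `w`. -/
def IsCritical {K : Type*} [Field K] {k : ℕ}
    (M : Matrix (Fin k) (Fin k) (Polynomial K)) (d : ℕ) (v : Fin k → Polynomial K) : Prop :=
  BasisAdapted v ∧ ∃ w : Fin k → Polynomial K, BasisAdapted w ∧
    M.mulVec v = (X : Polynomial K) ^ d • w

/-!
If every entry of `N` is divisible by `x`, then `N = x • N'` with `N'` upper triangular and
`M N' = x • 1`. Writing `M = [[A, c], [0, m]]` and `N' = [[B, d], [0, n]]`, we get `A B = x • 1`,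
`A d + n c = 0` and `m n = x`. Since `x` is irreducible, `m` or `n` is a unit; then `c` is cleared
by a triangular row operation (`m` a unit) or column operation (`n` a unit, by `A d + n c = 0`),
leaving `[[A, 0], [0, 1 or x]]`, and induction on `k` finishes.

Otherwise some entry `N i j` has nonzero constant term. The column `v = N e_j` satisfies
`M v = x² e_j`, so the ideal of its coordinates contains `x²` and the entry `N i j`, which is prime
to `x²`: `v` is critical of degree 2.
-/

namespace Matrix

variable {R : Type*} [CommRing R] {k : ℕ}

/-- The matrix `[[A, c], [0, m]]`. -/
def extendUpper (A : Matrix (Fin k) (Fin k) R) (c : Fin k → R) (m : R) :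
    Matrix (Fin (k + 1)) (Fin (k + 1)) R :=
  of fun i j =>
    Fin.lastCases (Fin.lastCases m (fun _ => 0) j) (fun i' => Fin.lastCases (c i') (A i') j) i

variable {A B : Matrix (Fin k) (Fin k) R} {c d : Fin k → R} {m n : R}

@[simp] lemma extendUpper_castSucc_castSucc (i j : Fin k) :
    extendUpper A c m i.castSucc j.castSucc = A i j := by
  simp [extendUpper]

@[simp] lemma extendUpper_castSucc_last (i : Fin k) :
    extendUpper A c m i.castSucc (Fin.last k) = c i := by
  simp [extendUpper]

@[simp] lemma extendUpper_last_castSucc (j : Fin k) :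
    extendUpper A c m (Fin.last k) j.castSucc = 0 := by
  simp [extendUpper]

@[simp] lemma extendUpper_last_last : extendUpper A c m (Fin.last k) (Fin.last k) = m := by
  simp [extendUpper]

lemma extendUpper_inj {A' : Matrix (Fin k) (Fin k) R} {c' : Fin k → R} {m' : R} :
    extendUpper A c m = extendUpper A' c' m' ↔ A = A' ∧ c = c' ∧ m = m' := by
  refine ⟨fun h => ⟨?_, ?_, ?_⟩, fun ⟨hA, hc, hm⟩ => hA ▸ hc ▸ hm ▸ rfl⟩
  · ext i j
    simpa using congr_fun₂ h i.castSucc j.castSucc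
  · ext i
    simpa using congr_fun₂ h i.castSucc (Fin.last k)
  · simpa using congr_fun₂ h (Fin.last k) (Fin.last k)

lemma extendUpper_mul_extendUpper :
    extendUpper A c m * extendUpper B d n = extendUpper (A * B) (A *ᵥ d + n • c) (m * n) := by
  ext i j
  induction i using Fin.lastCases <;> induction j using Fin.lastCases <;>
    simp [Fin.sum_univ_castSucc, mul_apply, mulVec, dotProduct, mul_comm]

lemma smul_one_eq_extendUpper (r : R) :
    r • (1 : Matrix (Fin (k + 1)) (Fin (k + 1)) R) = extendUpper (r • 1) 0 r := by
  ext i j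
  induction i using Fin.lastCases <;> induction j using Fin.lastCases <;>
    simp [one_apply, (Fin.castSucc_lt_last _).ne, (Fin.castSucc_lt_last _).ne']

lemma extendUpper_one : extendUpper (1 : Matrix (Fin k) (Fin k) R) 0 1 = 1 := by
  simpa using (smul_one_eq_extendUpper (k := k) (1 : R)).symm

lemma isUnit_extendUpper (hA : IsUnit A) (hm : IsUnit m) : IsUnit (extendUpper A c m) := by
  obtain ⟨B, hAB, hBA⟩ := isUnit_iff_exists.mp hA
  obtain ⟨t, hmt, htm⟩ := isUnit_iff_exists.mp hm
  refine isUnit_iff_exists.mpr ⟨extendUpper B (-t • B *ᵥ c) t, ?_, ?_⟩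
  · rw [extendUpper_mul_extendUpper, hAB, hmt, mulVec_smul, mulVec_mulVec, hAB, one_mulVec,
      neg_smul, neg_add_cancel, extendUpper_one]
  · rw [extendUpper_mul_extendUpper, hBA, htm, smul_smul, mul_neg, hmt, neg_one_smul,
      add_neg_cancel, extendUpper_one]

lemma blockTriangular_extendUpper (hA : A.BlockTriangular id) :
    (extendUpper A c m).BlockTriangular id := by
  intro i j hij
  induction i using Fin.lastCases <;> induction j using Fin.lastCases
  · exact absurd hij (lt_irrefl _)
  · simp
  · exact absurd hij (Fin.le_last _).not_gt
  · simpa using hA (Fin.castSucc_lt_castSucc_iff.mp hij)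

lemma BlockTriangular.exists_eq_extendUpper {M : Matrix (Fin (k + 1)) (Fin (k + 1)) R}
    (hM : M.BlockTriangular id) :
    ∃ (A : Matrix (Fin k) (Fin k) R) (c : Fin k → R) (m : R),
      A.BlockTriangular id ∧ M = extendUpper A c m := by
  refine ⟨M.submatrix Fin.castSucc Fin.castSucc, fun i => M i.castSucc (Fin.last k),
    M (Fin.last k) (Fin.last k), fun i j hij => hM (Fin.castSucc_lt_castSucc_iff.mpr hij), ?_⟩
  ext i j
  induction i using Fin.lastCases <;> induction j using Fin.lastCases
  · simp
  · rw [extendUpper_last_castSucc]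
    exact hM (Fin.castSucc_lt_last _)
  · simp
  · simp

lemma isDiag_extendUpper (hA : A.IsDiag) : (extendUpper A 0 m).IsDiag := by
  intro i j hij
  induction i using Fin.lastCases <;> induction j using Fin.lastCases
  · exact absurd rfl hij
  · simp
  · simp
  · simpa using hA (fun h => hij (congrArg _ h))

def TriangularlyEquivalent {ι : Type*} [Fintype ι] [LinearOrder ι]
    (M M' : Matrix ι ι R) : Prop :=
  ∃ G H : Matrix ι ι R, IsUnit G ∧ IsUnit H ∧ G.BlockTriangular id ∧ H.BlockTriangular id ∧
    G * M * H = M'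

lemma TriangularlyEquivalent.trans {ι : Type*} [Fintype ι] [LinearOrder ι]
    {M M' M'' : Matrix ι ι R} (h : TriangularlyEquivalent M M')
    (h' : TriangularlyEquivalent M' M'') : TriangularlyEquivalent M M'' := by
  obtain ⟨G, H, hG, hH, hGt, hHt, rfl⟩ := h
  obtain ⟨G', H', hG', hH', hGt', hHt', rfl⟩ := h'
  exact ⟨G' * G, H * H', hG'.mul hG, hH.mul hH', hGt'.mul hGt, hHt.mul hHt',
    by simp only [Matrix.mul_assoc]⟩

lemma TriangularlyEquivalent.extendUpper_zero {A' : Matrix (Fin k) (Fin k) R}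
    (h : TriangularlyEquivalent A A') (r : R) :
    TriangularlyEquivalent (extendUpper A 0 r) (extendUpper A' 0 r) := by
  obtain ⟨G, H, hG, hH, hGt, hHt, rfl⟩ := h
  refine ⟨extendUpper G 0 1, extendUpper H 0 1, isUnit_extendUpper hG isUnit_one,
    isUnit_extendUpper hH isUnit_one, blockTriangular_extendUpper hGt,
    blockTriangular_extendUpper hHt, ?_⟩
  simp [extendUpper_mul_extendUpper]

lemma triangularlyEquivalent_extendUpper_zero {p : R} (hp : Irreducible p) (hmn : m * n = p)
    (hcol : A *ᵥ d + n • c = 0) :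
    ∃ r ∈ ({1, p} : Set R), TriangularlyEquivalent (extendUpper A c m) (extendUpper A 0 r) := by
  rcases hp.isUnit_or_isUnit hmn.symm with hm | hn
  · obtain ⟨t, hmt, htm⟩ := isUnit_iff_exists.mp hm
    refine ⟨1, Or.inl rfl, extendUpper 1 (-t • c) t, 1,
      isUnit_extendUpper isUnit_one (isUnit_iff_exists.mpr ⟨m, htm, hmt⟩), isUnit_one,
      blockTriangular_extendUpper blockTriangular_one, blockTriangular_one, ?_⟩
    rw [Matrix.mul_one, extendUpper_mul_extendUpper, Matrix.one_mul, one_mulVec, smul_smul,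
      mul_neg, hmt, neg_one_smul, add_neg_cancel, htm]
  · refine ⟨p, Or.inr rfl, 1, extendUpper 1 d n, isUnit_one,
      isUnit_extendUpper isUnit_one hn, blockTriangular_one,
      blockTriangular_extendUpper blockTriangular_one, ?_⟩
    rw [Matrix.one_mul, extendUpper_mul_extendUpper, Matrix.mul_one, hcol, hmn]

theorem exists_isDiag_triangularlyEquivalent_of_mul_eq_smul_one {p : R} (hp : Irreducible p) :
    ∀ {k : ℕ} (M N : Matrix (Fin k) (Fin k) R), M.BlockTriangular id → N.BlockTriangular id →
      M * N = p • 1 →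
      ∃ D, D.IsDiag ∧ (∀ i, D i i = 1 ∨ D i i = p) ∧ TriangularlyEquivalent M D
  | 0, M, _, _, _, _ =>
    ⟨M, fun i => i.elim0, fun i => i.elim0,
      1, 1, isUnit_one, isUnit_one, blockTriangular_one, blockTriangular_one, by simp⟩
  | k + 1, M, N, hM, hN, hMN => by
    obtain ⟨A, c, m, hA, rfl⟩ := hM.exists_eq_extendUpper
    obtain ⟨B, d, n, hB, rfl⟩ := hN.exists_eq_extendUpper
    rw [extendUpper_mul_extendUpper, smul_one_eq_extendUpper, extendUpper_inj] at hMN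
    obtain ⟨hAB, hcol, hmn⟩ := hMN
    obtain ⟨D, hD, hDdiag, hAD⟩ :=
      exists_isDiag_triangularlyEquivalent_of_mul_eq_smul_one hp A B hA hB hAB
    obtain ⟨r, hr, hMr⟩ := triangularlyEquivalent_extendUpper_zero hp hmn hcol
    refine ⟨extendUpper D 0 r, isDiag_extendUpper hD, fun i => ?_,
      hMr.trans (hAD.extendUpper_zero r)⟩
    induction i using Fin.lastCases
    · simpa using hr
    · simpa using hDdiag _

lemma BlockTriangular.exists_mul_eq_smul_one_of_dvd [IsDomain R] {M N : Matrix (Fin k) (Fin k) R}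
    {p q : R} (hN : N.BlockTriangular id) (hdvd : ∀ i j, p ∣ N i j) (hp : p ≠ 0)
    (hMN : M * N = (p * q) • 1) :
    ∃ N' : Matrix (Fin k) (Fin k) R, N'.BlockTriangular id ∧ M * N' = q • 1 := by
  choose N' hN' using hdvd
  have hpN' : N = p • of N' := by ext i j; exact hN' i j
  refine ⟨of N', fun i j hij => ?_, smul_right_injective _ hp ?_⟩
  · simpa [hN' i j, hp] using hN hij
  · simp only [← Matrix.mul_smul, ← hpN', hMN, _root_.smul_smul]

lemma mulVec_apply_mem_span_range (M : Matrix (Fin k) (Fin k) R) (v : Fin k → R) (j : Fin k) :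
    M.mulVec v j ∈ Ideal.span (Set.range v) :=
  show ∑ l, M j l * v l ∈ _ from
    Ideal.sum_mem _ fun l _ => Ideal.mul_mem_left _ _ (Ideal.subset_span (Set.mem_range_self l))

end Matrix

section

variable {K : Type*} [Field K] {k : ℕ}

lemma basisAdapted_single (j : Fin k) : BasisAdapted (Pi.single j (1 : K[X])) :=
  (Ideal.eq_top_iff_one _).mpr <| by
    simpa using Ideal.subset_span (Set.mem_range_self (f := Pi.single j (1 : K[X])) j)

lemma basisAdapted_of_X_pow_mem {v : Fin k → K[X]} {n : ℕ}
    (hX : X ^ n ∈ Ideal.span (Set.range v)) {i : Fin k} (hi : ¬ X ∣ v i) : BasisAdapted v := by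
  obtain ⟨a, b, hab⟩ := ((irreducible_X.coprime_iff_not_dvd).mpr hi).pow_left (m := n)
  refine (Ideal.eq_top_iff_one _).mpr (hab ▸ Ideal.add_mem _ (Ideal.mul_mem_left _ _ hX) ?_)
  exact Ideal.mul_mem_left _ _ (Ideal.subset_span ⟨i, rfl⟩)

lemma isCritical_col_of_mul_eq_X_pow_smul_one {M N : Matrix (Fin k) (Fin k) K[X]} {n : ℕ}
    (hMN : M * N = (X : K[X]) ^ n • 1) {i j : Fin k} (hij : ¬ X ∣ N i j) :
    IsCritical M n (fun l => N l j) := by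
  have hMv : M.mulVec (fun l => N l j) = (X : K[X]) ^ n • Pi.single j 1 := by
    funext l
    rw [show M.mulVec (fun l => N l j) l = (M * N) l j from rfl, hMN]
    simp [Matrix.one_apply, Pi.single_apply]
  refine ⟨basisAdapted_of_X_pow_mem (n := n) ?_ hij, _, basisAdapted_single j, hMv⟩
  simpa [hMv] using M.mulVec_apply_mem_span_range (fun l => N l j) j

end

/-- If `M` and `N` are upper triangular `k × k` matrices over `K[x]` with `M·N = x²·Id`, then
either there exist invertible upper triangular matrices `G`, `H` such that `G·M·H` is diagonal
with all diagonal entries equal to `1` or `x`, or `M` admits a critical vector of degree `2`. -/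
theorem statement1 {K : Type*} [Field K] {k : ℕ}
    (M N : Matrix (Fin k) (Fin k) (Polynomial K))
    (hM : M.BlockTriangular id) (hN : N.BlockTriangular id)
    (hMN : M * N = (X : Polynomial K) ^ 2 • (1 : Matrix (Fin k) (Fin k) (Polynomial K))) :
    (∃ G H : Matrix (Fin k) (Fin k) (Polynomial K),
      IsUnit G ∧ IsUnit H ∧ G.BlockTriangular id ∧ H.BlockTriangular id ∧
      (∀ i j, i ≠ j → (G * M * H) i j = 0) ∧
      (∀ i, (G * M * H) i i = 1 ∨ (G * M * H) i i = X)) ∨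
    (∃ v : Fin k → Polynomial K, IsCritical M 2 v) := by
  by_cases hX : ∀ i j, X ∣ N i j
  · left
    obtain ⟨N', hN', hMN'⟩ :=
      hN.exists_mul_eq_smul_one_of_dvd hX X_ne_zero (by rwa [pow_two] at hMN)
    obtain ⟨D, hD, hDdiag, G, H, hG, hH, hGt, hHt, rfl⟩ :=
      Matrix.exists_isDiag_triangularlyEquivalent_of_mul_eq_smul_one irreducible_X M N' hM hN'
        hMN'
    exact ⟨G, H, hG, hH, hGt, hHt, fun i j hij => hD hij, hDdiag⟩
  · obtain ⟨i, j, hij⟩ : ∃ i j, ¬ X ∣ N i j := by simpa only [not_forall] using hX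
    exact Or.inr ⟨_, isCritical_col_of_mul_eq_X_pow_smul_one hMN hij⟩
end

section
/- The set Λ is a K[x]-subalgebra of the matrix algebra M_n(K(x)) containing the identity matrix (where K[x] embeds via p ↦ p·Id), and Λ is a free K[x]-module of rank n². In particular, Λ is an R-order for R = K[x]. -/
/-!
Λ is the "tiled" set of matrices with entries in `x^{c_{ij}} K[x]` for an exponent matrix `c`
with `c_{ii} ≤ 0` and `c_{ik} ≤ c_{ij} + c_{jk}`; the triangle inequality is exactly what makes
it closed under multiplication. As a module it is the image of `M_n(K[x])` under the injective
`K[x]`-linear map scaling the `(i,j)` entry by `x^{c_{ij}}`, hence free of rank `n²`.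
-/

open Polynomial Matrix

noncomputable section

/-- The exponent `c_{ij}` (with 0-based indices `i j : Fin n`, corresponding to the 1-based
`c_{i+1,j+1} = δ_{i+1>j+1} + δ_{i+1>j+2} − δ_{(i+1,j+1)=(1,n)}`). -/
def cExp (n : ℕ) (i j : Fin n) : ℤ :=
  (if (j : ℕ) < (i : ℕ) then 1 else 0) + (if (j : ℕ) + 1 < (i : ℕ) then 1 else 0)
    - (if (i : ℕ) = 0 ∧ (j : ℕ) = n - 1 then 1 else 0)

/-- The subset `x^c · K[x]` of `K(x)`. -/
def xPow (K : Type*) [Field K] (c : ℤ) : Set (RatFunc K) :=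
  {f | ∃ p : Polynomial K, f = RatFunc.X ^ c * algebraMap (Polynomial K) (RatFunc K) p}

/-- The carrier set of the tiled order `Λ ⊆ M_n(K(x))`:
matrices whose `(i,j)` entry lies in `x^{c_{ij}}·K[x]`. -/
def lambdaCarrier (K : Type*) [Field K] (n : ℕ) : Set (Matrix (Fin n) (Fin n) (RatFunc K)) :=
  {M | ∀ i j, M i j ∈ xPow K (cExp n i j)}

section TiledOrder

variable {K : Type*} [Field K]

lemma mem_xPow_of_le {c d : ℤ} (h : c ≤ d) (p : K[X]) :
    (RatFunc.X : RatFunc K) ^ d * algebraMap K[X] (RatFunc K) p ∈ xPow K c := by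
  refine ⟨X ^ (d - c).toNat * p, ?_⟩
  rw [map_mul, map_pow, RatFunc.algebraMap_X, ← mul_assoc, ← zpow_natCast,
    ← zpow_add₀ RatFunc.X_ne_zero]
  congr 2
  omega

lemma mul_mem_xPow {c d e : ℤ} (h : e ≤ c + d) {a b : RatFunc K}
    (ha : a ∈ xPow K c) (hb : b ∈ xPow K d) : a * b ∈ xPow K e := by
  obtain ⟨p, rfl⟩ := ha
  obtain ⟨q, rfl⟩ := hb
  convert mem_xPow_of_le h (p * q) using 1
  rw [zpow_add₀ RatFunc.X_ne_zero, map_mul]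
  ring

variable (K) in
def xPowSubmodule (c : ℤ) : Submodule K[X] (RatFunc K) where
  carrier := xPow K c
  zero_mem' := ⟨0, by simp⟩
  add_mem' := by
    rintro _ _ ⟨p, rfl⟩ ⟨q, rfl⟩
    exact ⟨p + q, by rw [map_add, mul_add]⟩
  smul_mem' := by
    rintro r _ ⟨p, rfl⟩
    exact ⟨r * p, by rw [Algebra.smul_def, map_mul]; ring⟩

variable {ι : Type*} (c : ι → ι → ℤ)

variable (K) in
def scaleEntries : Matrix ι ι K[X] →ₗ[K[X]] Matrix ι ι (RatFunc K) where
  toFun P := of fun i j => (RatFunc.X : RatFunc K) ^ c i j * algebraMap K[X] (RatFunc K) (P i j)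
  map_add' P Q := by
    ext i j
    simp [mul_add]
  map_smul' r P := by
    ext i j
    simp only [of_apply, Matrix.smul_apply, RingHom.id_apply, smul_eq_mul, map_mul,
      Algebra.smul_def]
    ring

lemma scaleEntries_injective : Function.Injective (scaleEntries K c) := by
  intro P Q hPQ
  refine Matrix.ext fun i j => ?_
  have := congrFun₂ hPQ i j
  simp only [scaleEntries, LinearMap.coe_mk, AddHom.coe_mk, of_apply] at this
  exact RatFunc.algebraMap_injective K
    (mul_left_cancel₀ (zpow_ne_zero _ RatFunc.X_ne_zero) this)

variable [Fintype ι] [DecidableEq ι]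

variable (K) in
def tiledOrder (hdiag : ∀ i, c i i ≤ 0) (htri : ∀ i j k, c i k ≤ c i j + c j k) :
    Subalgebra K[X] (Matrix ι ι (RatFunc K)) where
  carrier := {M | ∀ i j, M i j ∈ xPow K (c i j)}
  add_mem' hM hN i j := (xPowSubmodule K (c i j)).add_mem (hM i j) (hN i j)
  mul_mem' hM hN i k := (xPowSubmodule K (c i k)).sum_mem fun j _ =>
    mul_mem_xPow (htri i j k) (hM i j) (hN j k)
  algebraMap_mem' r i j := by
    rw [algebraMap_matrix_apply]
    split_ifs with h
    · subst h
      simpa using mem_xPow_of_le (hdiag i) r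
    · exact (xPowSubmodule K (c i j)).zero_mem

lemma range_scaleEntries (hdiag : ∀ i, c i i ≤ 0) (htri : ∀ i j k, c i k ≤ c i j + c j k) :
    LinearMap.range (scaleEntries K c) = Subalgebra.toSubmodule (tiledOrder K c hdiag htri) := by
  ext M
  refine ⟨?_, fun hM => ?_⟩
  · rintro ⟨P, rfl⟩ i j
    exact ⟨P i j, rfl⟩
  · choose P hP using hM
    exact ⟨of P, funext₂ fun i j => (hP i j).symm⟩

def tiledOrderEquivMatrix (hdiag : ∀ i, c i i ≤ 0) (htri : ∀ i j k, c i k ≤ c i j + c j k) :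
    Matrix ι ι K[X] ≃ₗ[K[X]] Subalgebra.toSubmodule (tiledOrder K c hdiag htri) :=
  (LinearEquiv.ofInjective _ (scaleEntries_injective c)).trans
    (LinearEquiv.ofEq _ _ (range_scaleEntries c hdiag htri))

theorem tiledOrder_free (hdiag : ∀ i, c i i ≤ 0) (htri : ∀ i j k, c i k ≤ c i j + c j k) :
    Module.Free K[X] (tiledOrder K c hdiag htri) :=
  Module.Free.of_equiv (tiledOrderEquivMatrix c hdiag htri)

theorem finrank_tiledOrder (hdiag : ∀ i, c i i ≤ 0) (htri : ∀ i j k, c i k ≤ c i j + c j k) :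
    Module.finrank K[X] (tiledOrder K c hdiag htri) = Fintype.card ι ^ 2 := by
  change Module.finrank K[X] (Subalgebra.toSubmodule (tiledOrder K c hdiag htri)) = _
  rw [← (tiledOrderEquivMatrix c hdiag htri).finrank_eq, Module.finrank_matrix,
    Module.finrank_self, mul_one, sq]

end TiledOrder

lemma cExp_self_le {n : ℕ} (i : Fin n) : cExp n i i ≤ 0 := by
  simp only [cExp]
  split_ifs <;> omega

lemma cExp_le_add {n : ℕ} (hn : 2 ≤ n) (i j k : Fin n) :
    cExp n i k ≤ cExp n i j + cExp n j k := by
  have := i.isLt; have := j.isLt; have := k.isLt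
  simp only [cExp]
  split_ifs <;> omega

/-- The set `Λ` is a `K[x]`-subalgebra of `M_n(K(x))` (in particular it contains the identity
matrix, `K[x]` embedding via `p ↦ p·Id`), and it is a free `K[x]`-module of rank `n²`.
In particular `Λ` is a `K[x]`-order. -/
theorem statement3 (K : Type*) [Field K] (n : ℕ) (hn : 3 ≤ n) :
    ∃ Λ : Subalgebra (Polynomial K) (Matrix (Fin n) (Fin n) (RatFunc K)),
      (Λ : Set (Matrix (Fin n) (Fin n) (RatFunc K))) = lambdaCarrier K n ∧
      Module.Free (Polynomial K) ↥Λ ∧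
      Module.finrank (Polynomial K) ↥Λ = n ^ 2 := by
  have hdiag : ∀ i, cExp n i i ≤ 0 := cExp_self_le
  have htri := cExp_le_add (Nat.le_of_succ_le hn)
  refine ⟨tiledOrder K (cExp n) hdiag htri, rfl, tiledOrder_free _ hdiag htri, ?_⟩
  rw [finrank_tiledOrder, Fintype.card_fin]
end
end

section
/- For any 1 ≤ s < t ≤ n and 1 ≤ u < v ≤ n, the K[x]-module Hom_Λ((s,t),(u,v)) of Λ-module homomorphisms is a free K[x]-module of rank 1. In particular, the endomorphism ring End_Λ((s,t)) of each indecomposable Cohen–Macaulay Λ-module is isomorphic to K[x]. -/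
set_option synthInstance.maxHeartbeats 1000000
set_option maxHeartbeats 1000000

open Polynomial Matrix

noncomputable section

/-- Exponent pattern of the module `(i,j)` (1-based `i j`; `k : ℕ` is a 0-based coordinate,
so the 1-based coordinate is `k+1`): `0` for `k+1 ≤ i`, `1` for `i < k+1 ≤ j`, `2` otherwise. -/
def dExp (i j k : ℕ) : ℤ := if k + 1 ≤ i then 0 else if k + 1 ≤ j then 1 else 2

/-- The carrier set of the `Λ`-module `(i,j)` inside the column space `K(x)^n`. -/
def ijSet (K : Type*) [Field K] (n : ℕ) (i j : ℕ) : Set (Fin n → RatFunc K) :=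
  {v | ∀ k : Fin n, v k ∈ xPow K (dExp i j (k : ℕ))}

/-- Column vectors form a module over the matrix ring via `mulVec`. -/
instance matVecModule (K : Type*) [Field K] (n : ℕ) :
    Module (Matrix (Fin n) (Fin n) (RatFunc K)) (Fin n → RatFunc K) where
  smul M v := M.mulVec v
  one_smul v := Matrix.one_mulVec v
  mul_smul M N v := (Matrix.mulVec_mulVec v M N).symm
  smul_zero M := Matrix.mulVec_zero M
  smul_add M u v := Matrix.mulVec_add M u v
  add_smul M N v := Matrix.add_mulVec M N v
  zero_smul v := Matrix.zero_mulVec v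

/-!
`Λ` contains the matrix units `x² E_{ij}`, and each lattice `(s,t)` contains the vectors
`x² eᵢ` and has polynomial coordinates. Commuting with these matrix units forces a `Λ`-linear map
`(s,t) → (u,v)` to be multiplication by a single scalar `r ∈ K(x)`, and such a scalar maps
`(s,t)` into `(u,v)` exactly when `r ∈ x^e K[x]`, `e = maxₖ (d_{uv}(k) - d_{st}(k))`. Hence
`Hom_Λ((s,t),(u,v))` is free on multiplication by `x^e`, and `e = 0` for endomorphisms.
-/

namespace TiledOrder

variable {K : Type} [Field K] {n : ℕ}

section xPow

lemma zpow_mem_xPow {a c : ℤ} (h : c ≤ a) : (RatFunc.X : RatFunc K) ^ a ∈ xPow K c := by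
  refine ⟨Polynomial.X ^ (a - c).toNat, ?_⟩
  rw [map_pow, RatFunc.algebraMap_X, ← zpow_natCast, Int.toNat_of_nonneg (by omega),
    ← zpow_add₀ RatFunc.X_ne_zero, add_sub_cancel]

lemma zero_mem_xPow (c : ℤ) : (0 : RatFunc K) ∈ xPow K c := ⟨0, by simp⟩

lemma mul_mem_xPow {a b : ℤ} {f g : RatFunc K} (hf : f ∈ xPow K a) (hg : g ∈ xPow K b) :
    f * g ∈ xPow K (a + b) := by
  obtain ⟨p, rfl⟩ := hf
  obtain ⟨q, rfl⟩ := hg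
  exact ⟨p * q, by rw [zpow_add₀ RatFunc.X_ne_zero, map_mul]; ring⟩

lemma mem_xPow_of_zpow_mul_mem {a c : ℤ} {f : RatFunc K}
    (hf : RatFunc.X ^ a * f ∈ xPow K (a + c)) : f ∈ xPow K c := by
  have := mul_mem_xPow (zpow_mem_xPow (le_refl (-a))) hf
  rwa [← mul_assoc, ← zpow_add₀ RatFunc.X_ne_zero, neg_add_cancel, zpow_zero, one_mul,
    neg_add_cancel_left] at this

lemma xPow_antitone {c d : ℤ} (h : d ≤ c) : xPow K c ⊆ xPow K d := by
  rintro _ ⟨p, rfl⟩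
  obtain ⟨q, hq⟩ := zpow_mem_xPow (K := K) h
  exact ⟨q * p, by rw [hq, map_mul]; ring⟩

lemma exists_eq_algebraMap_of_mem_xPow {c : ℤ} (hc : 0 ≤ c) {f : RatFunc K}
    (hf : f ∈ xPow K c) : ∃ p : K[X], f = algebraMap K[X] (RatFunc K) p := by
  obtain ⟨p, hp⟩ := xPow_antitone hc hf
  exact ⟨p, by simpa using hp⟩

end xPow

/-- The lattice `⊕ₖ x^{d k} K[x]` in `K(x)^n`; `ijSet K n i j` is the lattice of `dExp i j`. -/
def lattice (K : Type) [Field K] (d : Fin n → ℤ) : Set (Fin n → RatFunc K) :=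
  {v | ∀ k, v k ∈ xPow K (d k)}

lemma single_mem_lattice {d : Fin n → ℤ} {k : Fin n} {f : RatFunc K} (hf : f ∈ xPow K (d k)) :
    Pi.single k f ∈ lattice K d := by
  intro i
  rcases eq_or_ne i k with rfl | hik
  · simpa using hf
  · simpa [hik] using zero_mem_xPow (d i)

/-- `h_le` and `h_eq` say that `e = maxₖ (d' k - d k)`. -/
lemma smul_mem_lattice_iff {d d' : Fin n → ℤ} {e : ℤ} (h_le : ∀ k, d' k ≤ e + d k)
    (h_eq : ∃ k, d' k = e + d k) {r : RatFunc K} :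
    (∀ m ∈ lattice K d, r • m ∈ lattice K d') ↔ r ∈ xPow K e := by
  constructor
  · intro h
    obtain ⟨k, hk⟩ := h_eq
    have := h _ (single_mem_lattice (zpow_mem_xPow (le_refl (d k)))) k
    rw [Pi.smul_apply, Pi.single_eq_same, smul_eq_mul, mul_comm, hk] at this
    exact mem_xPow_of_zpow_mul_mem (by rwa [add_comm])
  · intro hr m hm k
    exact xPow_antitone (h_le k) (mul_mem_xPow hr (hm k))

section Action

variable (Λ : Subalgebra K[X] (Matrix (Fin n) (Fin n) (RatFunc K)))

lemma algebraMap_smul_vec (p : K[X]) (v : Fin n → RatFunc K) :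
    algebraMap K[X] Λ p • v = algebraMap K[X] (RatFunc K) p • v := by
  change algebraMap K[X] (Matrix (Fin n) (Fin n) (RatFunc K)) p *ᵥ v = _
  ext k
  simp [Matrix.algebraMap_eq_diagonal, Matrix.mulVec_diagonal]

lemma smul_comm_ratFunc_smul (A : Λ) (r : RatFunc K) (v : Fin n → RatFunc K) :
    A • r • v = r • A • v :=
  Matrix.mulVec_smul _ r v

def scalarHom {S T : Submodule Λ (Fin n → RatFunc K)} (r : RatFunc K)
    (h : ∀ m ∈ S, r • m ∈ T) : S →ₗ[Λ] T where
  toFun m := ⟨r • m, h m m.2⟩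
  map_add' m m' := Subtype.ext (smul_add r (m : Fin n → RatFunc K) m')
  map_smul' A m := Subtype.ext (smul_comm_ratFunc_smul Λ A r m).symm

end Action

section LinearMap

variable {Λ : Subalgebra K[X] (Matrix (Fin n) (Fin n) (RatFunc K))}
  {S T : Submodule Λ (Fin n → RatFunc K)} {a : RatFunc K}

/-- The matrix unit `single i j a` sends `m` to `m j • (a eᵢ)`; when `m j` is a polynomial
this is the central action of `m j`, which `g` commutes with. -/
lemma mul_linearMap_apply (hΛ : ∀ i j, Matrix.single i j a ∈ Λ)
    (hS : ∀ i, Pi.single i a ∈ S) (g : S →ₗ[Λ] T) (m : S) (i j : Fin n) {p : K[X]}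
    (hp : (m : Fin n → RatFunc K) j = algebraMap K[X] (RatFunc K) p) :
    a * (g m : Fin n → RatFunc K) j =
      (m : Fin n → RatFunc K) j * (g ⟨_, hS i⟩ : Fin n → RatFunc K) i := by
  set A : Λ := ⟨_, hΛ i j⟩
  have single_smul : ∀ v : Fin n → RatFunc K, A • v = Pi.single i (a * v j) :=
    fun v => Matrix.single_mulVec i j a v
  have hmove : A • m = algebraMap K[X] Λ p • ⟨_, hS i⟩ := by
    ext k
    simp only [Submodule.coe_smul, single_smul, algebraMap_smul_vec, hp]
    rcases eq_or_ne k i with rfl | hki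
    · simp [mul_comm]
    · simp [hki]
  have hg := congrArg (fun x : T => (x : Fin n → RatFunc K) i)
    (by rw [← g.map_smul, hmove, g.map_smul] : A • g m = algebraMap K[X] Λ p • g ⟨_, hS i⟩)
  simpa only [Submodule.coe_smul, single_smul, algebraMap_smul_vec, Pi.single_eq_same,
    Pi.smul_apply, smul_eq_mul, ← hp] using hg

theorem exists_smul_eq_of_linearMap (ha : a ≠ 0) (hΛ : ∀ i j, Matrix.single i j a ∈ Λ)
    (hS : ∀ i, Pi.single i a ∈ S)
    (hS_poly : ∀ m ∈ S, ∀ k, ∃ p : K[X], m k = algebraMap K[X] (RatFunc K) p)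
    (g : S →ₗ[Λ] T) :
    ∃ r : RatFunc K, ∀ m : S, (g m : Fin n → RatFunc K) = r • (m : Fin n → RatFunc K) := by
  rcases isEmpty_or_nonempty (Fin n) with hn | ⟨⟨i⟩⟩
  · exact ⟨0, fun m => funext isEmptyElim⟩
  refine ⟨(g ⟨_, hS i⟩ : Fin n → RatFunc K) i / a, fun m => funext fun j => ?_⟩
  obtain ⟨p, hp⟩ := hS_poly m m.2 j
  have := mul_linearMap_apply hΛ hS g m i j hp
  rw [Pi.smul_apply, smul_eq_mul, div_mul_eq_mul_div, eq_div_iff ha]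
  linear_combination this

end LinearMap

def algebraMapEnd (R A M : Type*) [CommSemiring R] [Semiring A] [Algebra R A] [AddCommMonoid M]
    [Module A M] : R →+* Module.End A M where
  toFun p :=
    { toFun := (algebraMap R A p • ·)
      map_add' := smul_add _
      map_smul' := fun b m => by simp only [RingHom.id_apply, smul_smul, Algebra.commutes] }
  map_one' := by ext; simp
  map_mul' p q := by
    ext m
    change algebraMap R A (p * q) • m = algebraMap R A p • algebraMap R A q • m
    rw [map_mul, mul_smul]
  map_zero' := by ext; simp
  map_add' p q := by ext; simp [add_smul]

section Lattice

variable {Λ : Subalgebra K[X] (Matrix (Fin n) (Fin n) (RatFunc K))}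
  {S T : Submodule Λ (Fin n → RatFunc K)} {d d' : Fin n → ℤ} {N : ℕ}

theorem existsUnique_algebraMap_smul
    (hΛ : ∀ i j, Matrix.single i j ((RatFunc.X : RatFunc K) ^ N) ∈ Λ)
    (hd : ∀ k, d k ∈ Set.Icc 0 (N : ℤ)) (hS : (S : Set (Fin n → RatFunc K)) = lattice K d)
    (hT : (T : Set (Fin n → RatFunc K)) = lattice K d') {e : ℤ} (h_le : ∀ k, d' k ≤ e + d k)
    (h_eq : ∃ k, d' k = e + d k) (f₀ : S →ₗ[Λ] T)
    (hf₀ : ∀ m : S,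
      (f₀ m : Fin n → RatFunc K) = (RatFunc.X : RatFunc K) ^ e • (m : Fin n → RatFunc K))
    (g : S →ₗ[Λ] T) : ∃! p : K[X], ∀ m : S, g m = algebraMap K[X] Λ p • f₀ m := by
  have hsingle : ∀ i, Pi.single i ((RatFunc.X : RatFunc K) ^ N) ∈ S := fun i => by
    rw [← SetLike.mem_coe, hS, ← zpow_natCast]
    exact single_mem_lattice (zpow_mem_xPow (hd i).2)
  have hpoly : ∀ m ∈ S, ∀ k, ∃ p : K[X], m k = algebraMap K[X] (RatFunc K) p := fun m hm k => by
    rw [← SetLike.mem_coe, hS] at hm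
    exact exists_eq_algebraMap_of_mem_xPow (hd k).1 (hm k)
  obtain ⟨r, hr⟩ :=
    exists_smul_eq_of_linearMap (pow_ne_zero N (RatFunc.X_ne_zero (K := K))) hΛ hsingle hpoly g
  obtain ⟨q, rfl⟩ : r ∈ xPow K e := (smul_mem_lattice_iff h_le h_eq).mp fun m hm => by
    rw [← hS] at hm
    rw [← hT, ← hr ⟨m, hm⟩]
    exact (g _).2
  refine ⟨q, fun m => Subtype.ext ?_, fun p hp => ?_⟩
  · rw [hr, Submodule.coe_smul, algebraMap_smul_vec, hf₀, smul_smul, mul_comm]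
  · obtain ⟨k, -⟩ := h_eq
    have h := congrArg (fun x : T => (x : Fin n → RatFunc K) k) (hp ⟨_, hsingle k⟩)
    simp only [hr, Submodule.coe_smul, algebraMap_smul_vec, hf₀, Pi.smul_apply,
      Pi.single_eq_same, smul_eq_mul] at h
    refine RatFunc.algebraMap_injective K (mul_right_cancel₀ (b := RatFunc.X ^ e * RatFunc.X ^ N)
      (mul_ne_zero (zpow_ne_zero e RatFunc.X_ne_zero) (pow_ne_zero N RatFunc.X_ne_zero)) ?_)
    linear_combination -h

theorem bijective_algebraMapEnd [NeZero n]
    (hΛ : ∀ i j, Matrix.single i j ((RatFunc.X : RatFunc K) ^ N) ∈ Λ)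
    (hd : ∀ k, d k ∈ Set.Icc 0 (N : ℤ)) (hS : (S : Set (Fin n → RatFunc K)) = lattice K d) :
    Function.Bijective (algebraMapEnd K[X] Λ S) := by
  have h := existsUnique_algebraMap_smul hΛ hd hS hS (e := 0) (by simp) ⟨0, by simp⟩
    LinearMap.id (by simp)
  refine ⟨fun p q hpq => (h (algebraMapEnd K[X] Λ S p)).unique (fun _ => rfl) fun m => ?_,
    fun g => ?_⟩
  · exact LinearMap.congr_fun hpq m
  · obtain ⟨p, hp, -⟩ := h g
    exact ⟨p, LinearMap.ext fun m => (hp m).symm⟩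

end Lattice

lemma dExp_mem_Icc (i j k : ℕ) : dExp i j k ∈ Set.Icc 0 2 := by
  unfold dExp; split_ifs <;> norm_num

lemma single_mem_of_coe_eq_lambdaCarrier
    {Λ : Subalgebra K[X] (Matrix (Fin n) (Fin n) (RatFunc K))}
    (hΛ : (Λ : Set (Matrix (Fin n) (Fin n) (RatFunc K))) = lambdaCarrier K n) (i j : Fin n) :
    Matrix.single i j ((RatFunc.X : RatFunc K) ^ 2) ∈ Λ := by
  have hc : ∀ a b : Fin n, cExp n a b ≤ 2 := by intro a b; unfold cExp; split_ifs <;> norm_num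
  rw [← SetLike.mem_coe, hΛ]
  intro a b
  rw [Matrix.single_apply]
  split_ifs
  · exact_mod_cast zpow_mem_xPow (hc a b)
  · exact zero_mem_xPow _

end TiledOrder

/-- For any `1 ≤ s < t ≤ n` and `1 ≤ u < v ≤ n`, the `K[x]`-module `Hom_Λ((s,t),(u,v))` is
free of rank `1`: there is a homomorphism `f₀` such that every homomorphism `g` is uniquely of
the form `g = p • f₀` with `p ∈ K[x]` (where `p` acts through the central embedding
`p ↦ p·Id` of `K[x]` into `Λ`). In particular, the endomorphism ring `End_Λ((s,t))` is
isomorphic to `K[x]`. -/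
theorem statement7 (K : Type) [Field K] (n : ℕ) (hn : 3 ≤ n)
    (Λ : Subalgebra (Polynomial K) (Matrix (Fin n) (Fin n) (RatFunc K)))
    (hΛ : (Λ : Set (Matrix (Fin n) (Fin n) (RatFunc K))) = lambdaCarrier K n)
    (E : ℕ → ℕ → Submodule ↥Λ (Fin n → RatFunc K))
    (hE : ∀ i j : ℕ, 1 ≤ i → i < j → j ≤ n →
      (E i j : Set (Fin n → RatFunc K)) = ijSet K n i j) :
    (∀ s t u v : ℕ, 1 ≤ s → s < t → t ≤ n → 1 ≤ u → u < v → v ≤ n →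
      ∃ f₀ : ↥(E s t) →ₗ[↥Λ] ↥(E u v),
        ∀ g : ↥(E s t) →ₗ[↥Λ] ↥(E u v), ∃! p : Polynomial K,
          ∀ m : ↥(E s t), g m = algebraMap (Polynomial K) ↥Λ p • f₀ m) ∧
    (∀ s t : ℕ, 1 ≤ s → s < t → t ≤ n →
      Nonempty (Module.End ↥Λ ↥(E s t) ≃+* Polynomial K)) := by
  have : NeZero n := ⟨by omega⟩
  have hunits := TiledOrder.single_mem_of_coe_eq_lambdaCarrier hΛ
  refine ⟨fun s t u v hs hst ht hu huv hv => ?_, fun s t hs hst ht => ?_⟩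
  · obtain ⟨k, hk⟩ := Finite.exists_max fun k : Fin n => dExp u v k - dExp s t k
    have h_le : ∀ j : Fin n, dExp u v j ≤ (dExp u v k - dExp s t k) + dExp s t j :=
      fun j => by linarith [hk j]
    have hmem :
        ∀ m ∈ E s t, (RatFunc.X : RatFunc K) ^ (dExp u v k - dExp s t k) • m ∈ E u v := by
      intro m hm
      rw [← SetLike.mem_coe, hE s t hs hst ht] at hm
      rw [← SetLike.mem_coe, hE u v hu huv hv]
      exact (TiledOrder.smul_mem_lattice_iff h_le ⟨k, by ring⟩).mpr
        (TiledOrder.zpow_mem_xPow le_rfl) m hm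
    exact ⟨TiledOrder.scalarHom Λ _ hmem, TiledOrder.existsUnique_algebraMap_smul hunits
      (fun k => TiledOrder.dExp_mem_Icc s t k) (hE s t hs hst ht) (hE u v hu huv hv) h_le
      ⟨k, by ring⟩ _ fun _ => rfl⟩
  · exact ⟨(RingEquiv.ofBijective _ (TiledOrder.bijective_algebraMapEnd hunits
      (fun k => TiledOrder.dExp_mem_Icc s t k) (hE s t hs hst ht))).symm⟩
end
end

section
/- Let n ≥ 3, T = K[X,Y] the polynomial ring in two variables, S = T/(X^{n−2} − Y²), and π : T → S the quotient map. For 0 ≤ i ≤ n−1, let S_ī be the K-linear span in S of {π(X^c·Y^d) : c, d ≥ 0, c − d ≡ i (mod n)}. Then S_ī = {π(q(X·Y)·X^i) : q ∈ K[t]} for each 0 ≤ i ≤ n−2, and S_{n−1} = {π(q(X·Y)·Y) : q ∈ K[t]}. In particular, each S_ī is a free module of rank 1 over the subring π(K[X·Y]) of S. -/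
set_option synthInstance.maxHeartbeats 1000000
set_option maxHeartbeats 1000000

open MvPolynomial

noncomputable section

/-- The quotient ring `S = K[X,Y]/(X^{n-2} - Y²)`, with `X = X 0` and `Y = X 1`. -/
abbrev SRing (K : Type) [Field K] (n : ℕ) : Type :=
  MvPolynomial (Fin 2) K ⧸
    (Ideal.span {(X 0 : MvPolynomial (Fin 2) K) ^ (n - 2) - X 1 ^ 2})

/-- The quotient map `π : K[X,Y] → S`. -/
abbrev sMk (K : Type) [Field K] (n : ℕ) : MvPolynomial (Fin 2) K →+* SRing K n :=
  Ideal.Quotient.mk _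

/-- The degree-`ī` component `S_ī` of `S` for the `ℤ/nℤ`-grading with `deg X = 1` and
`deg Y = −1`: the `K`-linear span of the images of the monomials `X^c·Y^d` with
`c − d ≡ i (mod n)`. -/
def Sdeg (K : Type) [Field K] (n : ℕ) (i : ZMod n) : Submodule K (SRing K n) :=
  Submodule.span K
    {s | ∃ c d : ℕ, (c : ZMod n) - (d : ZMod n) = i ∧
      s = sMk K n ((X 0 : MvPolynomial (Fin 2) K) ^ c * X 1 ^ d)}

/-! In `S` one has `y² = x^(n-2)`, hence `(xy)² = x^n`. Therefore every monomial `x^c y^d` equals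
`(xy)^(2t) · x^r y^ε` with `r < n` and `ε ≤ 1`, and in degree `j` the relations `x^(n-1) = (xy)·y`
and `x^(j+1)·y = (xy)·x^j` turn `x^r y^ε` into `(xy)^e · g_j`, where `g_j = x^j` for `j ≤ n - 2`
and `g_(n-1) = y`. Conversely each `(xy)^k · g_j` is a monomial of degree `j`. -/

theorem Polynomial.range_linearMap_eq_span {R M : Type*} [CommSemiring R] [AddCommMonoid M]
    [Module R M] (f : Polynomial R →ₗ[R] M) :
    LinearMap.range f = Submodule.span R (Set.range fun k : ℕ => f (Polynomial.X ^ k)) := by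
  rw [LinearMap.range_eq_map, ← (Polynomial.basisMonomials R).span_eq, Submodule.map_span,
    ← Set.range_comp, Polynomial.coe_basisMonomials]
  simp only [Function.comp_def, Polynomial.monomial_one_right_eq_X_pow]

namespace SRing

variable {K : Type} [Field K] {n : ℕ}

theorem sMk_X0_pow_eq_X1_sq : sMk K n (X 0) ^ (n - 2) = sMk K n (X 1) ^ 2 := by
  rw [← map_pow, ← map_pow]
  exact Ideal.Quotient.eq.mpr (Ideal.subset_span rfl)

theorem sMk_X0_pow_eq_XY_sq (hn : 2 ≤ n) : sMk K n (X 0) ^ n = sMk K n (X 0 * X 1) ^ 2 := by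
  rw [map_mul, mul_pow, ← sMk_X0_pow_eq_X1_sq, ← pow_add]
  congr 1
  omega

theorem sMk_X1_pow (d : ℕ) :
    sMk K n (X 1) ^ d = sMk K n (X 0) ^ ((n - 2) * (d / 2)) * sMk K n (X 1) ^ (d % 2) := by
  conv_lhs => rw [← Nat.div_add_mod d 2, pow_add, pow_mul, ← sMk_X0_pow_eq_X1_sq, ← pow_mul]

theorem sMk_X0_pow (hn : 2 ≤ n) (a : ℕ) :
    sMk K n (X 0) ^ a = sMk K n (X 0 * X 1) ^ (2 * (a / n)) * sMk K n (X 0) ^ (a % n) := by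
  conv_lhs => rw [← Nat.div_add_mod a n, pow_add, pow_mul, sMk_X0_pow_eq_XY_sq hn, ← pow_mul]

variable (K n) in
def componentGenerator (j : ℕ) : MvPolynomial (Fin 2) K :=
  if j ≤ n - 2 then X 0 ^ j else X 1

theorem exists_sMk_reduced_monomial_eq (hn : 2 ≤ n) {r ε j : ℕ} (hr : r < n) (hε : ε < 2)
    (hj : j < n) (h : r ≡ j + ε [MOD n]) :
    ∃ e : ℕ, sMk K n (X 0) ^ r * sMk K n (X 1) ^ ε =
      sMk K n (X 0 * X 1) ^ e * sMk K n (componentGenerator K n j) := by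
  unfold componentGenerator
  interval_cases ε <;> split_ifs
  · obtain rfl : r = j := Nat.ModEq.eq_of_lt_of_lt h hr hj
    exact ⟨0, by simp⟩
  · obtain rfl : r = j := Nat.ModEq.eq_of_lt_of_lt h hr hj
    refine ⟨1, ?_⟩
    rw [show r = n - 2 + 1 by omega, pow_succ (sMk K n (X 0)), sMk_X0_pow_eq_X1_sq, map_mul]
    ring
  · obtain rfl : r = j + 1 := Nat.ModEq.eq_of_lt_of_lt h hr (by omega)
    exact ⟨1, by simp only [map_mul, map_pow]; ring⟩
  · have h0 : r ≡ 0 [MOD n] :=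
      h.trans (by rw [show j + 1 = n by omega]; exact Nat.modulus_modEq_zero)
    obtain rfl : r = 0 := Nat.ModEq.eq_of_lt_of_lt h0 hr (by omega)
    exact ⟨0, by simp⟩

theorem exists_sMk_monomial_eq (hn : 2 ≤ n) {c d j : ℕ} (hj : j < n) (h : (c : ZMod n) - d = j) :
    ∃ k : ℕ, sMk K n (X 0 ^ c * X 1 ^ d) =
      sMk K n ((X 0 * X 1) ^ k * componentGenerator K n j) := by
  set a := c + (n - 2) * (d / 2)
  have ha : a % n ≡ j + d % 2 [MOD n] := by
    refine (Nat.mod_modEq a n).trans ((ZMod.natCast_eq_natCast_iff _ _ _).mp ?_)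
    have hd := congrArg (Nat.cast : ℕ → ZMod n) (Nat.div_add_mod d 2)
    push_cast [a, Nat.cast_sub hn, ZMod.natCast_self] at hd ⊢
    linear_combination h - hd
  obtain ⟨e, he⟩ := exists_sMk_reduced_monomial_eq (K := K) hn (Nat.mod_lt a (by omega))
    (Nat.mod_lt d two_pos) hj ha
  refine ⟨2 * (a / n) + e, ?_⟩
  rw [map_mul, map_mul, map_pow, map_pow, map_pow, sMk_X1_pow, ← mul_assoc, ← pow_add,
    sMk_X0_pow hn, mul_assoc, he]
  ring

variable (K n) in
def aevalXYMul (r : MvPolynomial (Fin 2) K) : Polynomial K →ₗ[K] SRing K n :=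
  (Ideal.Quotient.mkₐ K _).toLinearMap ∘ₗ LinearMap.mulRight K r ∘ₗ
    (Polynomial.aeval (X 0 * X 1 : MvPolynomial (Fin 2) K)).toLinearMap

theorem aevalXYMul_apply (r : MvPolynomial (Fin 2) K) (q : Polynomial K) :
    aevalXYMul K n r q = sMk K n (Polynomial.aeval (X 0 * X 1 : MvPolynomial (Fin 2) K) q * r) :=
  rfl

theorem Sdeg_eq_range_aevalXYMul (hn : 2 ≤ n) {j : ℕ} (hj : j < n) :
    Sdeg K n j = LinearMap.range (aevalXYMul K n (componentGenerator K n j)) := by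
  rw [Polynomial.range_linearMap_eq_span, Sdeg]
  apply Submodule.span_eq_span
  · rintro _ ⟨c, d, h, rfl⟩
    obtain ⟨k, hk⟩ := exists_sMk_monomial_eq (K := K) hn hj h
    exact Submodule.subset_span ⟨k, by simp [aevalXYMul_apply, hk]⟩
  · rintro _ ⟨k, rfl⟩
    refine Submodule.subset_span ?_
    simp only [aevalXYMul_apply, map_pow, Polynomial.aeval_X, componentGenerator]
    split_ifs
    · exact ⟨k + j, k, by push_cast; ring, congrArg _ (by ring)⟩
    · refine ⟨k, k + 1, ?_, congrArg _ (by ring)⟩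
      rw [show j = n - 1 by omega, Nat.cast_sub (by omega), ZMod.natCast_self]
      push_cast
      ring

end SRing

open SRing in
/-- For `0 ≤ i ≤ n−2` one has `S_ī = {π(q(X·Y)·X^i) : q ∈ K[t]}`, and
`S_{n−1} = {π(q(X·Y)·Y) : q ∈ K[t]}`.  In particular each `S_ī` is free of rank one over the
subring `π(K[X·Y])` of `S`. -/
theorem statement13 (K : Type) [Field K] (n : ℕ) (hn : 3 ≤ n) :
    (∀ i : ℕ, i ≤ n - 2 →
      (Sdeg K n (i : ZMod n) : Set (SRing K n)) =
        Set.range (fun q : Polynomial K =>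
          sMk K n (Polynomial.aeval ((X 0 : MvPolynomial (Fin 2) K) * X 1) q * X 0 ^ i))) ∧
    ((Sdeg K n ((n - 1 : ℕ) : ZMod n) : Set (SRing K n)) =
      Set.range (fun q : Polynomial K =>
        sMk K n (Polynomial.aeval ((X 0 : MvPolynomial (Fin 2) K) * X 1) q * X 1))) := by
  refine ⟨fun i hi => ?_, ?_⟩
  · rw [Sdeg_eq_range_aevalXYMul (by omega) (by omega), LinearMap.coe_range, componentGenerator,
      if_pos hi]
    rfl
  · rw [Sdeg_eq_range_aevalXYMul (by omega) (by omega), LinearMap.coe_range, componentGenerator,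
      if_neg (by omega)]
    rfl
end
end

section
/- Let n ≥ 3, S = K[X,Y]/(X^{n−2} − Y²) with the ℤ/nℤ-grading induced by deg(X) = 1, deg(Y) = −1, and let S^{[n]} ⊆ M_n(S) be the set of n×n matrices m over S such that m_{ab} ∈ S_{\overline{b−a}} for all 1 ≤ a, b ≤ n, where S_ī denotes the degree-ī component of S. Then S^{[n]} is a K-subalgebra of M_n(S), and there is a K-algebra isomorphism S^{[n]} → Λ sending π(X·Y)·Id to x·Id (i.e., an isomorphism of K[x]-algebras, where x acts on S^{[n]} by multiplication by the image of X·Y). -/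
set_option synthInstance.maxHeartbeats 1000000
set_option maxHeartbeats 1000000

open Polynomial Matrix MvPolynomial

noncomputable section

/-- The set `S^{[n]}` of `n × n` matrices `m` over `S` with `m a b ∈ S_{\overline{b−a}}`. -/
def snSet (K : Type) [Field K] (n : ℕ) : Set (Matrix (Fin n) (Fin n) (SRing K n)) :=
  {m | ∀ a b : Fin n, m a b ∈ Sdeg K n (((b : ℕ) : ZMod n) - ((a : ℕ) : ZMod n))}


/-!
Send `X ↦ x²` and `Y ↦ x ^ (n - 2)`; this kills `X ^ (n - 2) - Y²` and sends `t = XY` to `x ^ n`.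
Each graded piece `S_r` is a free `K[t]`-module on one generator (`X ^ r`, or `Y` in degree `-1`)
whose image is `x ^ w(r)`, so `S_r` embeds into `K(x)`. Conjugating entrywise by `diag (x ^ (2 a))`
gives an injective algebra map `S^{[n]} → M_n(K(x))`, and since `2a - 2b + w(b - a) = n c_{ab}` its
image is the image of `Λ` under the embedding `x ↦ x ^ n` of `K(x)` into itself.
-/

section DiagonalConj

variable {ι R S : Type*} [Fintype ι] [DecidableEq ι] [CommRing R] [CommSemiring S] [Algebra S R]

def Matrix.diagonalUnit (d : ι → Rˣ) : (Matrix ι ι R)ˣ :=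
  Units.map (diagonalRingHom ι R).toMonoidHom (MulEquiv.piUnits.symm d)

variable (S) in
def Matrix.diagonalConj (d : ι → Rˣ) : Matrix ι ι R ≃ₐ[S] Matrix ι ι R :=
  MulSemiringAction.toAlgEquiv S _ (ConjAct.toConjAct (diagonalUnit d))

theorem Matrix.diagonalConj_apply (d : ι → Rˣ) (M : Matrix ι ι R) (i j : ι) :
    diagonalConj S d M i j = d i * M i j * ↑(d j)⁻¹ := by
  simp [diagonalConj, diagonalUnit, ConjAct.units_smul_def, diagonal_mul, mul_diagonal,
    MulEquiv.piUnits]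

theorem Matrix.diagonalConj_smul_one (d : ι → Rˣ) (c : R) : diagonalConj S d (c • 1) = c • 1 := by
  ext i j
  rw [diagonalConj_apply]
  by_cases h : i = j
  · subst h
    rw [smul_apply, one_apply_eq, smul_eq_mul, mul_one, mul_comm _ c, mul_assoc, Units.mul_inv,
      mul_one]
  · simp [h]

end DiagonalConj

theorem Matrix.map_smul_one {ι R S F : Type*} [Fintype ι] [DecidableEq ι] [Semiring R]
    [Semiring S] [FunLike F R S] [RingHomClass F R S] (f : F) (c : R) :
    (c • (1 : Matrix ι ι R)).map f = f c • 1 := by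
  rw [smul_one_eq_diagonal, diagonal_map (map_zero f), smul_one_eq_diagonal]

theorem AlgEquiv.exists_apply_eq_of_range_eq {R A B C : Type*} [CommSemiring R] [Semiring A]
    [Semiring B] [Semiring C] [Algebra R A] [Algebra R B] [Algebra R C] {f : A →ₐ[R] C}
    {g : B →ₐ[R] C} (hf : Function.Injective f) (hg : Function.Injective g)
    (h : f.range = g.range) : ∃ e : A ≃ₐ[R] B, ∀ a, g (e a) = f a := by
  refine ⟨(ofInjective f hf).trans ((Subalgebra.equivOfEq _ _ h).trans (ofInjective g hg).symm),
    fun a => ?_⟩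
  exact congrArg Subtype.val
    ((ofInjective g hg).apply_symm_apply (Subalgebra.equivOfEq _ _ h (ofInjective f hf a)))

theorem RatFunc.aeval_X_pow_eq_algebraMap_expand {K : Type*} [Field K] (p : ℕ) (f : K[X]) :
    Polynomial.aeval (RatFunc.X ^ p) f = algebraMap K[X] (RatFunc K) (Polynomial.expand K p f) := by
  rw [← RatFunc.algebraMap_X, ← map_pow, Polynomial.aeval_algebraMap_apply]
  rfl

section RatFuncExpand

variable (K : Type*) [Field K] (p : ℕ) [NeZero p]

def RatFunc.expand : RatFunc K →ₐ[K] RatFunc K :=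
  RatFunc.mapAlgHom (Polynomial.expand K p) (nonZeroDivisors_le_comap_nonZeroDivisors_of_injective
    _ (Polynomial.expand_injective (NeZero.pos p)))

variable {K p}

theorem RatFunc.expand_algebraMap (f : K[X]) :
    RatFunc.expand K p (algebraMap K[X] (RatFunc K) f) =
      algebraMap K[X] (RatFunc K) (Polynomial.expand K p f) := by
  rw [RatFunc.expand, RatFunc.coe_mapAlgHom_eq_coe_map]
  simpa using RatFunc.map_apply_div (Polynomial.expand K p) _ f 1

theorem RatFunc.expand_X : RatFunc.expand K p RatFunc.X = RatFunc.X ^ p := by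
  rw [← RatFunc.algebraMap_X, RatFunc.expand_algebraMap, Polynomial.expand_X, map_pow]

theorem RatFunc.expand_injective : Function.Injective (RatFunc.expand K p) := by
  rw [RatFunc.expand, RatFunc.coe_mapAlgHom_eq_coe_map]
  exact RatFunc.map_injective _ _ (Polynomial.expand_injective (NeZero.pos p))

end RatFuncExpand

namespace SRing

variable (K : Type) [Field K] (n : ℕ)

def sX : SRing K n := sMk K n (X 0)
def sY : SRing K n := sMk K n (X 1)
def sT : SRing K n := sMk K n (X 0 * X 1)

theorem sT_eq : sT K n = sX K n * sY K n := map_mul _ _ _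

theorem sX_pow_sub_two : sX K n ^ (n - 2) = sY K n ^ 2 := by
  have h : sMk K n ((X 0 : MvPolynomial (Fin 2) K) ^ (n - 2) - X 1 ^ 2) = 0 :=
    Ideal.Quotient.eq_zero_iff_mem.mpr (Ideal.subset_span rfl)
  rwa [map_sub, sub_eq_zero, map_pow, map_pow] at h

theorem sMk_X_pow_mul_X_pow (c d : ℕ) :
    sMk K n ((X 0 : MvPolynomial (Fin 2) K) ^ c * X 1 ^ d) = sX K n ^ c * sY K n ^ d := by
  rw [map_mul, map_pow, map_pow]
  rfl

instance : SetLike.GradedMonoid (Sdeg K n) where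
  one_mem := Submodule.subset_span ⟨0, 0, by simp, by simp⟩
  mul_mem i j s u hs hu := by
    have hsu := Submodule.mul_mem_mul hs hu
    rw [Sdeg, Sdeg, Submodule.span_mul_span] at hsu
    refine Submodule.span_mono ?_ hsu
    rintro _ ⟨_, ⟨c, d, rfl, rfl⟩, _, ⟨c', d', rfl, rfl⟩, rfl⟩
    refine ⟨c + c', d + d', by push_cast; ring, ?_⟩
    simp only [sMk_X_pow_mul_X_pow]
    ring

def snSubalgebra : Subalgebra K (Matrix (Fin n) (Fin n) (SRing K n)) where
  carrier := snSet K n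
  mul_mem' {m m'} hm hm' a c := by
    rw [Matrix.mul_apply]
    refine Submodule.sum_mem _ fun b _ => ?_
    convert SetLike.mul_mem_graded (hm a b) (hm' b c) using 2
    ring
  add_mem' hm hm' a b := add_mem (hm a b) (hm' a b)
  algebraMap_mem' k a b := by
    rw [Matrix.algebraMap_matrix_apply]
    split_ifs with h
    · subst h
      rw [sub_self]
      exact SetLike.algebraMap_mem_graded _ k
    · exact zero_mem _

theorem coe_snSubalgebra :
    (snSubalgebra K n : Set (Matrix (Fin n) (Fin n) (SRing K n))) = snSet K n :=
  rfl

/-- The generator of `S_r` as a `K[t]`-module, `t = XY` (see `mem_Sdeg_iff`). -/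
def gen (r : ZMod n) : SRing K n := if r.val = n - 1 then sY K n else sX K n ^ r.val

def toRatFunc : SRing K n →ₐ[K] RatFunc K :=
  Ideal.Quotient.liftₐ _ (MvPolynomial.aeval ![RatFunc.X ^ 2, RatFunc.X ^ (n - 2)]) fun a ha => by
    obtain ⟨c, rfl⟩ := Ideal.mem_span_singleton'.mp ha
    simp [← pow_mul, mul_comm]

def weight (r : ZMod n) : ℕ := if r.val = n - 1 then n - 2 else 2 * r.val

/-- Conjugating by `diag (x ^ (2 a))` turns the grading condition `m a b ∈ S_{b - a}` into the
valuation condition `x ^ (n * cExp n a b) ∣ M a b` (see `two_mul_sub_add_weight`). -/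
def toRatFuncMatrix :
    Matrix (Fin n) (Fin n) (SRing K n) →ₐ[K] Matrix (Fin n) (Fin n) (RatFunc K) :=
  (diagonalConj K fun a : Fin n =>
    Units.mk0 RatFunc.X RatFunc.X_ne_zero ^ (2 * (a : ℕ))).toAlgHom.comp (toRatFunc K n).mapMatrix

variable {n}

theorem gen_zero (hn : 2 ≤ n) : gen K n 0 = 1 := by
  rw [gen, ZMod.val_zero, if_neg (by omega), pow_zero]

theorem gen_add_one (hn : 2 ≤ n) (r : ZMod n) :
    gen K n (r + 1) =
      if r.val = n - 1 then 1 else if r.val = n - 2 then sY K n else sX K n ^ (r.val + 1) := by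
  have : NeZero n := ⟨by omega⟩
  have hr := r.val_lt
  rw [gen, ZMod.val_add, ZMod.val_one_eq_one_mod, Nat.mod_eq_of_lt (by omega : 1 < n)]
  rcases (by omega : r.val = n - 1 ∨ r.val = n - 2 ∨ r.val + 1 < n - 1) with h | h | h
  · rw [h, Nat.sub_add_cancel (by omega), Nat.mod_self, if_neg (by omega), if_pos rfl, pow_zero]
  · rw [Nat.mod_eq_of_lt (by omega), if_pos (by omega), if_neg (by omega), if_pos h]
  · rw [Nat.mod_eq_of_lt (by omega), if_neg (by omega), if_neg (by omega), if_neg (by omega)]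

theorem sX_mul_gen (hn : 2 ≤ n) (r : ZMod n) :
    ∃ k : ℕ, sX K n * gen K n r = gen K n (r + 1) * sT K n ^ k := by
  rw [gen_add_one K hn, gen]
  split_ifs with h₁ h₂
  · exact ⟨1, by rw [one_mul, pow_one, sT_eq]⟩
  · exact ⟨1, by rw [h₂, sT_eq]; linear_combination sX K n * sX_pow_sub_two K n⟩
  · exact ⟨0, by ring⟩

theorem sY_mul_gen_add_one (hn : 2 ≤ n) (r : ZMod n) :
    ∃ k : ℕ, sY K n * gen K n (r + 1) = gen K n r * sT K n ^ k := by
  rw [gen_add_one K hn, gen]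
  split_ifs with h₁ h₂
  · exact ⟨0, by ring⟩
  · exact ⟨0, by rw [h₂]; linear_combination -sX_pow_sub_two K n⟩
  · exact ⟨1, by rw [sT_eq]; ring⟩

theorem sX_pow_mul_sY_pow (hn : 2 ≤ n) (c d : ℕ) :
    ∃ k : ℕ, sX K n ^ c * sY K n ^ d = gen K n ((c : ZMod n) - d) * sT K n ^ k := by
  induction c with
  | zero =>
    induction d with
    | zero => exact ⟨0, by simp [gen_zero K hn]⟩
    | succ d ih =>
      obtain ⟨k, hk⟩ := ih
      obtain ⟨l, hl⟩ := sY_mul_gen_add_one K hn (((0 : ℕ) : ZMod n) - (d + 1 : ℕ))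
      rw [show ((0 : ℕ) : ZMod n) - (d + 1 : ℕ) + 1 = ((0 : ℕ) : ZMod n) - d by push_cast; ring]
        at hl
      exact ⟨l + k, by linear_combination sY K n * hk + sT K n ^ k * hl⟩
  | succ c ih =>
    obtain ⟨k, hk⟩ := ih
    obtain ⟨l, hl⟩ := sX_mul_gen K hn ((c : ZMod n) - d)
    rw [show (c : ZMod n) - d + 1 = ((c + 1 : ℕ) : ZMod n) - d by push_cast; ring] at hl
    exact ⟨l + k, by linear_combination sX K n * hk + sT K n ^ k * hl⟩

theorem gen_mem_Sdeg (hn : 2 ≤ n) (r : ZMod n) : gen K n r ∈ Sdeg K n r := by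
  have : NeZero n := ⟨by omega⟩
  apply Submodule.subset_span
  rw [gen]
  split_ifs with h
  · refine ⟨0, 1, ?_, by rw [sMk_X_pow_mul_X_pow, pow_zero, one_mul, pow_one]⟩
    rw [← ZMod.natCast_zmod_val r, h, Nat.cast_sub (by omega), ZMod.natCast_self]
    push_cast
    ring
  · exact ⟨r.val, 0, by simp, by rw [sMk_X_pow_mul_X_pow, pow_zero, mul_one]⟩

theorem aeval_sT_mem_Sdeg_zero (p : K[X]) : aeval (sT K n) p ∈ Sdeg K n 0 := by
  have hT : sT K n ∈ SetLike.GradeZero.subalgebra (Sdeg K n) :=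
    Submodule.subset_span ⟨1, 1, sub_self _, by rw [sMk_X_pow_mul_X_pow, pow_one, pow_one, sT_eq]⟩
  exact Algebra.adjoin_le (Set.singleton_subset_iff.mpr hT) (aeval_mem_adjoin_singleton K _)

theorem mem_Sdeg_iff (hn : 2 ≤ n) {r : ZMod n} {s : SRing K n} :
    s ∈ Sdeg K n r ↔ ∃ p : K[X], s = gen K n r * aeval (sT K n) p := by
  constructor
  · intro hs
    induction hs using Submodule.span_induction with
    | mem x hx =>
      obtain ⟨c, d, rfl, rfl⟩ := hx
      obtain ⟨k, hk⟩ := sX_pow_mul_sY_pow K hn c d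
      exact ⟨Polynomial.X ^ k, by rw [sMk_X_pow_mul_X_pow, hk, map_pow, Polynomial.aeval_X]⟩
    | zero => exact ⟨0, by rw [map_zero, mul_zero]⟩
    | add x y _ _ hx hy =>
      obtain ⟨p, rfl⟩ := hx
      obtain ⟨q, rfl⟩ := hy
      exact ⟨p + q, by rw [map_add, mul_add]⟩
    | smul a x _ hx =>
      obtain ⟨p, rfl⟩ := hx
      exact ⟨a • p, by rw [map_smul, mul_smul_comm]⟩
  · rintro ⟨p, rfl⟩
    simpa using SetLike.mul_mem_graded (gen_mem_Sdeg K hn r) (aeval_sT_mem_Sdeg_zero K p)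

theorem two_mul_sub_add_weight (hn : 2 ≤ n) (a b : Fin n) :
    2 * (a : ℤ) - 2 * b + weight n ((b : ℕ) - (a : ℕ) : ZMod n) = n * cExp n a b := by
  have : NeZero n := ⟨by omega⟩
  have ha := a.isLt
  have hb := b.isLt
  have hval : (((b : ℕ) : ZMod n) - (a : ℕ)).val =
      if (a : ℕ) ≤ b then (b : ℕ) - a else (b : ℕ) + (n - a) := by
    split_ifs with h
    · rw [← Nat.cast_sub h, ZMod.val_natCast_of_lt (by omega)]
    · rw [show ((b : ℕ) : ZMod n) - (a : ℕ) = ((b + (n - a) : ℕ) : ZMod n) by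
        rw [Nat.cast_add, Nat.cast_sub ha.le, ZMod.natCast_self]; ring,
        ZMod.val_natCast_of_lt (by omega)]
  simp only [weight, cExp, hval]
  split_ifs <;> push_cast <;> omega

variable {K}

theorem toRatFunc_sMk (q : MvPolynomial (Fin 2) K) :
    toRatFunc K n (sMk K n q) = MvPolynomial.aeval ![RatFunc.X ^ 2, RatFunc.X ^ (n - 2)] q :=
  rfl

theorem toRatFunc_sX : toRatFunc K n (sX K n) = RatFunc.X ^ 2 := by
  simp [sX, toRatFunc_sMk]

theorem toRatFunc_sY : toRatFunc K n (sY K n) = RatFunc.X ^ (n - 2) := by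
  simp [sY, toRatFunc_sMk]

theorem toRatFunc_sT (hn : 2 ≤ n) : toRatFunc K n (sT K n) = RatFunc.X ^ n := by
  rw [sT_eq, map_mul, toRatFunc_sX, toRatFunc_sY, ← pow_add, Nat.add_sub_cancel' hn]

theorem toRatFunc_gen (r : ZMod n) : toRatFunc K n (gen K n r) = RatFunc.X ^ weight n r := by
  rw [gen, weight]
  split_ifs
  · exact toRatFunc_sY
  · rw [map_pow, toRatFunc_sX, ← pow_mul, mul_comm]

theorem toRatFunc_gen_mul_aeval (hn : 2 ≤ n) (r : ZMod n) (p : K[X]) :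
    toRatFunc K n (gen K n r * aeval (sT K n) p) =
      RatFunc.X ^ weight n r * algebraMap K[X] (RatFunc K) (Polynomial.expand K n p) := by
  rw [map_mul, toRatFunc_gen, ← aeval_algHom_apply, toRatFunc_sT hn,
    RatFunc.aeval_X_pow_eq_algebraMap_expand]

theorem toRatFunc_injOn_Sdeg (hn : 2 ≤ n) (r : ZMod n) :
    Set.InjOn (toRatFunc K n) (Sdeg K n r) := by
  intro s hs s' hs' h
  obtain ⟨p, rfl⟩ := (mem_Sdeg_iff K hn).1 hs
  obtain ⟨p', rfl⟩ := (mem_Sdeg_iff K hn).1 hs'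
  rw [toRatFunc_gen_mul_aeval hn, toRatFunc_gen_mul_aeval hn] at h
  rw [Polynomial.expand_injective (by omega) <| RatFunc.algebraMap_injective K <|
    mul_left_cancel₀ (pow_ne_zero _ RatFunc.X_ne_zero) h]

theorem toRatFuncMatrix_apply (m : Matrix (Fin n) (Fin n) (SRing K n)) (a b : Fin n) :
    toRatFuncMatrix K n m a b = RatFunc.X ^ (2 * (a : ℤ) - 2 * b) * toRatFunc K n (m a b) := by
  simp only [toRatFuncMatrix, AlgHom.coe_comp, AlgEquiv.coe_toAlgHom, Function.comp_apply,
    AlgHom.mapMatrix_apply, diagonalConj_apply, map_apply]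
  rw [zpow_sub₀ RatFunc.X_ne_zero, show 2 * (a : ℤ) = (2 * (a : ℕ) : ℕ) by push_cast; rfl,
    show 2 * (b : ℤ) = (2 * (b : ℕ) : ℕ) by push_cast; rfl, zpow_natCast, zpow_natCast]
  simp only [Units.val_pow_eq_pow_val, Units.val_inv_eq_inv_val, Units.val_mk0]
  ring

theorem toRatFuncMatrix_smul_one (s : SRing K n) :
    toRatFuncMatrix K n (s • 1) = toRatFunc K n s • 1 := by
  simp only [toRatFuncMatrix, AlgHom.coe_comp, AlgEquiv.coe_toAlgHom, Function.comp_apply,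
    AlgHom.mapMatrix_apply, map_smul_one, diagonalConj_smul_one]

theorem toRatFuncMatrix_injOn (hn : 2 ≤ n) : Set.InjOn (toRatFuncMatrix K n) (snSet K n) := by
  intro m hm m' hm' h
  ext a b
  have hab := congrFun (congrFun h a) b
  rw [toRatFuncMatrix_apply, toRatFuncMatrix_apply] at hab
  exact toRatFunc_injOn_Sdeg hn _ (hm a b) (hm' a b)
    (mul_left_cancel₀ (zpow_ne_zero _ RatFunc.X_ne_zero) hab)

theorem toRatFuncMatrix_of_gen (hn : 2 ≤ n) [NeZero n] (p : Fin n → Fin n → K[X]) :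
    toRatFuncMatrix K n (of fun a b => gen K n ((b : ℕ) - (a : ℕ)) * aeval (sT K n) (p a b)) =
      (of fun a b => RatFunc.X ^ cExp n a b * algebraMap K[X] (RatFunc K) (p a b)).map
        (RatFunc.expand K n) := by
  ext a b
  rw [toRatFuncMatrix_apply, of_apply, toRatFunc_gen_mul_aeval hn, map_apply, of_apply, map_mul,
    map_zpow₀, RatFunc.expand_X, RatFunc.expand_algebraMap, ← mul_assoc,
    ← zpow_natCast _ (weight _ _), ← zpow_add₀ RatFunc.X_ne_zero, two_mul_sub_add_weight hn,
    _root_.zpow_mul, zpow_natCast]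

theorem toRatFuncMatrix_image_snSet (hn : 2 ≤ n) [NeZero n] :
    toRatFuncMatrix K n '' snSet K n =
      (fun M => M.map (RatFunc.expand K n)) '' lambdaCarrier K n := by
  ext N
  constructor
  · rintro ⟨m, hm, rfl⟩
    choose p hp using fun a b => (mem_Sdeg_iff K hn).1 (hm a b)
    refine ⟨of fun a b => RatFunc.X ^ cExp n a b * algebraMap K[X] (RatFunc K) (p a b),
      fun a b => ⟨p a b, rfl⟩, ?_⟩
    dsimp only
    rw [← toRatFuncMatrix_of_gen hn]
    congr 1
    ext a b
    exact (hp a b).symm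
  · rintro ⟨M, hM, rfl⟩
    choose p hp using hM
    refine ⟨of fun a b => gen K n ((b : ℕ) - (a : ℕ)) * aeval (sT K n) (p a b),
      fun a b => (mem_Sdeg_iff K hn).2 ⟨p a b, rfl⟩, ?_⟩
    dsimp only
    rw [toRatFuncMatrix_of_gen hn]
    congr 1
    ext a b
    exact (hp a b).symm

end SRing

/-- `S^{[n]}` is a `K`-subalgebra of `M_n(S)` and there is a `K`-algebra isomorphism
`S^{[n]} → Λ` sending `π(X·Y)·Id` to `x·Id`. -/
theorem statement14 (K : Type) [Field K] (n : ℕ) (hn : 3 ≤ n)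
    (Λ : Subalgebra (Polynomial K) (Matrix (Fin n) (Fin n) (RatFunc K)))
    (hΛ : (Λ : Set (Matrix (Fin n) (Fin n) (RatFunc K))) = lambdaCarrier K n) :
    ∃ A : Subalgebra K (Matrix (Fin n) (Fin n) (SRing K n)),
      (A : Set (Matrix (Fin n) (Fin n) (SRing K n))) = snSet K n ∧
      ∃ e : ↥A ≃ₐ[K] ↥Λ,
        ∀ m : ↥A,
          (↑m : Matrix (Fin n) (Fin n) (SRing K n))
              = sMk K n ((X 0 : MvPolynomial (Fin 2) K) * X 1) •
                  (1 : Matrix (Fin n) (Fin n) (SRing K n)) →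
          (↑(e m) : Matrix (Fin n) (Fin n) (RatFunc K))
              = (RatFunc.X : RatFunc K) • (1 : Matrix (Fin n) (Fin n) (RatFunc K)) := by
  have : NeZero n := ⟨by omega⟩
  have hn₂ : 2 ≤ n := by omega
  set Φ := (SRing.toRatFuncMatrix K n).comp (SRing.snSubalgebra K n).val
  set Ψ := (RatFunc.expand K n).mapMatrix.comp (Λ.val.restrictScalars K)
  have hexpand : Function.Injective fun M : Matrix (Fin n) (Fin n) (RatFunc K) =>
      M.map (RatFunc.expand K n) := Matrix.map_injective RatFunc.expand_injective
  have hΦ : Function.Injective Φ := fun m m' h =>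
    Subtype.ext (SRing.toRatFuncMatrix_injOn hn₂ m.2 m'.2 h)
  have hΨ : Function.Injective Ψ := fun M M' h => Subtype.ext (hexpand h)
  have hrange : Φ.range = Ψ.range := SetLike.coe_injective <| by
    simpa [Φ, Ψ, Set.range_comp, hΛ, SRing.coe_snSubalgebra] using
      SRing.toRatFuncMatrix_image_snSet hn₂
  obtain ⟨e, he⟩ := AlgEquiv.exists_apply_eq_of_range_eq hΦ hΨ hrange
  refine ⟨SRing.snSubalgebra K n, rfl, e, fun m hm => hexpand ?_⟩
  calc (↑(e m) : Matrix (Fin n) (Fin n) (RatFunc K)).map (RatFunc.expand K n)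
      = Φ m := he m
    _ = SRing.toRatFuncMatrix K n (SRing.sT K n • 1) := congrArg (SRing.toRatFuncMatrix K n) hm
    _ = RatFunc.X ^ n • 1 := by rw [SRing.toRatFuncMatrix_smul_one, SRing.toRatFunc_sT hn₂]
    _ = ((RatFunc.X : RatFunc K) • (1 : Matrix (Fin n) (Fin n) (RatFunc K))).map
          (RatFunc.expand K n) := by rw [map_smul_one, RatFunc.expand_X]
end
end
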